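/- For all vertices μ, γ, ν₁, ν₂ of Γ: ρ_{[μ,γ]}(ν₁) < ρ_{[μ,γ]}(ν₂) if and only if [μ,ν₁]∩[μ,γ] ⊊ [μ,ν₂]∩[μ,γ]. In particular, ρ_{[μ,γ]} is strictly increasing along the path going from μ to γ and stays constant on any path going away from [μ,γ]. Moreover, if μ∼γ, then ρ_{[μ,γ]}(γ) = (V_{γμ}+1)/V_{μμ}. -/

import Mathlib

/-!
`M = PᵀP` is positive definite, its off-diagonal entries are `-1` on the edges of `Γ` and `0`
elsewhere, and `V = M⁻¹ = QQᵀ` has positive entries; `Γ` is a tree because each elementary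
modification either attaches a leaf or subdivides an edge. A vector that is `M`-harmonic on a set of
vertices and vanishes on the vertices bordering it vanishes on that set, since its restriction `x`
has `xᵀMx = 0`. Applied on the component of `μ` in `Γ - z`, this gives the product formula
`V_zz V_μν = V_μz V_zν` for `z ∈ [μ,ν]`. Hence `ρ_{[μ,γ]}(ν) = ρ_{[μ,γ]}(m)` for the median `m`
of `μ, γ, ν`, the far end of `[μ,ν] ∩ [μ,γ]`, and along `[μ,γ]` the product formula turns
`ρ(a) < ρ(b)` into the strict Cauchy–Schwarz inequality `V_ab V_ba < V_aa V_bb`. For `μ ∼ γ`,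
`V_μμ V_·γ - V_μγ V_·μ` vanishes at `μ` and at its other neighbours, so its image under `M` at `μ`
is `-(V_μμ V_γγ - V_μγ V_γμ)`, which is also `-V_μγ`.
-/

open Matrix BigOperators

open scoped Classical

noncomputable section

/-- Proximity data of a dual graph on vertex set `Fin N`, built from a single
root vertex by a finite sequence of elementary modifications. Vertices are
ordered by creation; each new vertex is proximate to at most two existing
(earlier) vertices, which must be adjacent to each other at that time if
there are two of them. -/
structure DualGraph where
  N : ℕ
  Npos : 0 < N
  prox : Fin N → Fin N → Prop
  prox_lt : ∀ {μ ν}, prox μ ν → ν < μ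
  prox_card : ∀ μ, {ν | prox μ ν}.ncard ≤ 2
  prox_nonempty : ∀ μ : Fin N, 0 < (μ : ℕ) → ∃ ν, prox μ ν
  prox_pair : ∀ {μ a b}, prox μ a → prox μ b → a ≠ b →
      (prox a b ∨ prox b a) ∧ ∀ ρ, ρ < μ → ¬(prox ρ a ∧ prox ρ b)

namespace DualGraph

variable (G : DualGraph)

/-- The proximity matrix `P`. -/
def P : Matrix (Fin G.N) (Fin G.N) ℚ :=
  fun μ ν => if μ = ν then 1 else if G.prox μ ν then -1 else 0

/-- `Q = P⁻¹`. -/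
def Q : Matrix (Fin G.N) (Fin G.N) ℚ := (G.P)⁻¹

/-- The valuation matrix `V = (PᵀP)⁻¹`. -/
def V : Matrix (Fin G.N) (Fin G.N) ℚ := (G.Pᵀ * G.P)⁻¹

/-- Adjacency in the dual graph: `μ ∼ ν` iff `(PᵀP)_{μν} = -1`. -/
def adj (μ ν : Fin G.N) : Prop := μ ≠ ν ∧ (G.Pᵀ * G.P) μ ν = -1

lemma adj_symm {μ ν : Fin G.N} (h : G.adj μ ν) : G.adj ν μ := by
  obtain ⟨hne, h2⟩ := h
  refine ⟨hne.symm, ?_⟩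
  have ht : (G.Pᵀ * G.P)ᵀ = G.Pᵀ * G.P := by
    rw [Matrix.transpose_mul, Matrix.transpose_transpose]
  calc (G.Pᵀ * G.P) ν μ = (G.Pᵀ * G.P)ᵀ μ ν := rfl
    _ = (G.Pᵀ * G.P) μ ν := by rw [ht]
    _ = -1 := h2

/-- The dual graph as a simple graph. -/
def graph : SimpleGraph (Fin G.N) where
  Adj := G.adj
  symm := ⟨fun _ _ h => G.adj_symm h⟩
  loopless := ⟨fun μ h => h.1 rfl⟩

/-- The graph distance `d(μ,ν)`. -/
def dist (μ ν : Fin G.N) : ℕ := G.graph.dist μ ν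

/-- The set of vertices on the unique path `[μ,γ]` from `μ` to `γ`. -/
def pathSet (μ γ : Fin G.N) : Finset (Fin G.N) :=
  Finset.univ.filter (fun ν => G.dist μ ν + G.dist ν γ = G.dist μ γ)

/-- The branch `Γ^μ_ν` emanating from `μ` towards `ν`: the maximal connected
subgraph of `Γ` containing `ν` but not `μ` (with `Γ^μ_μ = ∅`). -/
def branch (μ ν : Fin G.N) : Finset (Fin G.N) :=
  Finset.univ.filter (fun η => ν ≠ μ ∧ η ≠ μ ∧ μ ∉ G.pathSet ν η)

/-- The set of vertices adjacent to `μ`. -/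
def nbrs (μ : Fin G.N) : Finset (Fin G.N) := Finset.univ.filter (fun ν => G.adj μ ν)

/-- The valence `v_Γ(μ)`: the number of vertices adjacent to `μ`. -/
def valence (μ : Fin G.N) : ℕ := (G.nbrs μ).card

/-- The weight `w_Γ(μ) = (PᵀP)_{μμ}`. -/
def w (μ : Fin G.N) : ℚ := (G.Pᵀ * G.P) μ μ

/-- The canonical vector `k`, `k_ν = Σ_μ q_{νμ}`. -/
def kvec : Fin G.N → ℚ := fun ν => ∑ μ, G.Q ν μ

/-- A divisor with valuation vector `f` is antinef iff its factorization
vector `f̂ = f PᵀP` is nonnegative. -/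
def Antinef (f : Fin G.N → ℚ) : Prop := ∀ ν, 0 ≤ (f ᵥ* (G.Pᵀ * G.P)) ν

/-- `λ(fE, gE; ν) = (f_ν + k_ν + 1)/g_ν` for divisors with valuation
vectors `f`, `g`. -/
def lamDiv (f g : Fin G.N → ℚ) (ν : Fin G.N) : ℚ := (f ν + G.kvec ν + 1) / g ν

/-- `ρ_{[μ,γ]}(ν) = V_{γν}/V_{μν}`. -/
def rho (μ γ ν : Fin G.N) : ℚ := G.V γ ν / G.V μ ν

/-- `r̂_{[μ,γ]} = 𝟙_γ − ρ_{[μ,γ]}(μ)·𝟙_μ`. -/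
def rhat (μ γ : Fin G.N) : Fin G.N → ℚ :=
  fun j => (if j = γ then 1 else 0) - G.rho μ γ μ * (if j = μ then 1 else 0)

/-- `φ_η^{[μ,γ]}(ν) = (r̂_{[μ,γ]}V)_ν / V_{ην}`. -/
def phi (η μ γ ν : Fin G.N) : ℚ := (G.rhat μ γ ᵥ* G.V) ν / G.V η ν

/-- The transform `f̂_{⟨ĝ⟩[ĥ]}` relative to the vertex `μ`. -/
def transform (μ : Fin G.N) (fh gh hh : Fin G.N → ℚ) : Fin G.N → ℚ :=
  fh - (∑ i ∈ G.nbrs μ, ∑ j ∈ G.branch μ i, gh j • G.rhat i j)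
     + ∑ i ∈ G.nbrs μ, hh i • G.rhat μ i

/-- The transform `f̂^𝒩 = f̂ − Σ_i f̂_i·r̂_{[μ,i]}` relative to the vertex `μ`. -/
def nmap (μ : Fin G.N) (fh : Fin G.N → ℚ) : Fin G.N → ℚ :=
  fh - ∑ i, fh i • G.rhat μ i

/-- A vertex is free if it is proximate to at most one vertex. -/
def Free (μ : Fin G.N) : Prop := {ν | G.prox μ ν}.ncard ≤ 1

/-- `μ` is infinitely near to `ν` (written `ν ⊂ μ`): the reflexive-transitive
closure of proximity. -/
def InfNear (μ ν : Fin G.N) : Prop := Relation.ReflTransGen G.prox μ ν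

/-- The root vertex. -/
def root : Fin G.N := ⟨0, G.Npos⟩

/-- The branch `Γ^μ_ν` is anterior to `μ` if `μ` is infinitely near to some of
its vertices; otherwise it is posterior. -/
def Anterior (μ ν : Fin G.N) : Prop := ∃ η ∈ G.branch μ ν, G.InfNear μ η

/-- The pair `(γ,τ)` associated to `μ`. -/
def PairAssociated (γ τ μ : Fin G.N) : Prop :=
  G.InfNear τ γ ∧ G.InfNear μ τ ∧ G.Free τ ∧
  (∀ ν, G.Free ν → G.InfNear μ ν → G.InfNear τ ν) ∧
  ((¬ G.Free γ ∧ ∀ ν, ¬ G.Free ν → G.InfNear τ ν → G.InfNear γ ν) ∨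
   ((∀ ν, G.InfNear τ ν → G.Free ν) ∧ γ = G.root))

/-- The entries of `V` as natural numbers (they are positive integers). -/
def Vnat (μ ν : Fin G.N) : ℕ := (G.V μ ν).num.toNat

/-- The submonoid `SV^μ_ν` of `ℕ` generated by `{V_{μi} : i ∈ Γ^μ_ν ∪ {μ}}`. -/
def SVb (μ ν : Fin G.N) : AddSubmonoid ℕ :=
  AddSubmonoid.closure ↑((insert μ (G.branch μ ν)).image (G.Vnat μ))

/-- `s^μ_ν = gcd{V_{μi} : i ∈ Γ^μ_ν ∪ {μ}}`. -/
def sgcd (μ ν : Fin G.N) : ℕ := (insert μ (G.branch μ ν)).gcd (G.Vnat μ)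

/-- The submonoid `S^μ` of `ℕ` generated by the `s^μ_ν`, `ν ∈ Γ`. -/
def Ssg (μ : Fin G.N) : AddSubmonoid ℕ :=
  AddSubmonoid.closure (Set.range (fun ν => G.sgcd μ ν))

/-- The valuation vector `d = d̂V` of the ideal with factorization vector `d̂`. -/
def dval (dh : Fin G.N → ℕ) : Fin G.N → ℚ := (fun i => (dh i : ℚ)) ᵥ* G.V

/-- `λ(a,ν) = (a + k_ν + 1)/d_ν`. -/
def lamA (dh : Fin G.N → ℕ) (a : ℚ) (ν : Fin G.N) : ℚ :=
  (a + G.kvec ν + 1) / G.dval dh ν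

/-- The set of jumping numbers of the ideal with factorization vector `d̂`
supported at the vertex `μ`. -/
def Hset (dh : Fin G.N → ℕ) (μ : Fin G.N) : Set ℚ :=
  { ξ | ∃ f : Fin G.N → ℤ, G.Antinef (fun i => (f i : ℚ)) ∧
      (∀ ν, G.lamA dh (f μ : ℚ) μ ≤ G.lamA dh (f ν : ℚ) ν) ∧
      ξ = G.lamA dh (f μ : ℚ) μ }

end DualGraph
end

namespace SimpleGraph

variable {α : Type*} {T : SimpleGraph α} {u v w x y z : α}

def Between (T : SimpleGraph α) (u x v : α) : Prop := T.dist u x + T.dist x v = T.dist u v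

lemma Between.symm (h : T.Between u x v) : T.Between v x u := by
  unfold Between at *
  rw [dist_comm (u := v) (v := x), dist_comm (u := x) (v := u), dist_comm (u := v) (v := u)]
  omega

lemma between_self_left : T.Between u u v := by simp [Between]

lemma between_self_right : T.Between u v v := by simp [Between]

lemma Connected.between_trans_left (hT : T.Connected) (hx : T.Between u x v)
    (hy : T.Between u y x) : T.Between u y v := by
  unfold Between at *
  have := hT.dist_triangle (u := y) (v := x) (w := v)
  have := hT.dist_triangle (u := u) (v := y) (w := v)
  omega

lemma Connected.between_trans_right (hT : T.Connected) (hx : T.Between u x v)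
    (hy : T.Between x y v) : T.Between u y v :=
  (hT.between_trans_left hx.symm hy.symm).symm

lemma Connected.between_trans_right_left (hT : T.Connected) (hx : T.Between u x v)
    (hy : T.Between x y v) : T.Between u x y := by
  have := hT.dist_triangle (u := u) (v := x) (w := y)
  have := hT.dist_triangle (u := u) (v := y) (w := v)
  unfold Between at *
  omega

lemma Connected.eq_of_between (hT : T.Connected) (h₁ : T.Between u x y) (h₂ : T.Between u y x) :
    x = y := by
  unfold Between at *
  rw [dist_comm (u := y)] at h₂
  exact hT.dist_eq_zero_iff.1 (by omega)

lemma Connected.between_of_mem_support (hT : T.Connected) {p : T.Walk u v}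
    (hp : p.length = T.dist u v) (hz : z ∈ p.support) : T.Between u z v := by
  have hsplit := congrArg Walk.length (p.take_spec hz)
  rw [Walk.length_append] at hsplit
  have := dist_le (p.takeUntil z hz)
  have := dist_le (p.dropUntil z hz)
  have := hT.dist_triangle (u := u) (v := z) (w := v)
  unfold Between
  omega

lemma Walk.IsPath.append {p : T.Walk u v} {q : T.Walk v w} (hp : p.IsPath)
    (hq : q.IsPath) (h : ∀ x ∈ p.support, x ∈ q.support → x = v) : (p.append q).IsPath := by
  rw [Walk.isPath_def, Walk.support_append]
  refine hp.support_nodup.append hq.support_nodup.tail fun a hap haq => ?_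
  obtain rfl := h a hap (List.mem_of_mem_tail haq)
  have := hq.support_nodup
  rw [← q.cons_tail_support, List.nodup_cons] at this
  exact this.1 haq

lemma IsTree.length_eq_dist (hT : T.IsTree) {p : T.Walk u v} (hp : p.IsPath) :
    p.length = T.dist u v := by
  obtain ⟨q, hq, hlen⟩ := hT.connected.exists_path_of_dist u v
  have hpq : p = q := congrArg Subtype.val <|
    (hT.isAcyclic.subsingleton_path u v).elim ⟨p, hp⟩ ⟨q, hq⟩
  rw [hpq, hlen]

lemma IsTree.mem_support_of_between (hT : T.IsTree) (h : T.Between u z v) (p : T.Walk u v) :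
    z ∈ p.support := by
  obtain ⟨p₁, hp₁⟩ := hT.connected.exists_walk_length_eq_dist u z
  obtain ⟨p₂, hp₂⟩ := hT.connected.exists_walk_length_eq_dist z v
  have hgeod : (p₁.append p₂).length = T.dist u v := by rw [Walk.length_append, hp₁, hp₂]; exact h
  have : p.bypass = p₁.append p₂ := congrArg Subtype.val <|
    (hT.isAcyclic.subsingleton_path u v).elim ⟨p.bypass, p.bypass_isPath⟩
      ⟨_, (p₁.append p₂).isPath_of_length_eq_dist hgeod⟩
  refine p.support_bypass_subset_support ?_
  rw [this, Walk.mem_support_append_iff]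
  exact Or.inl p₁.end_mem_support

lemma IsTree.between_of_adj_of_between (hT : T.IsTree) (hxy : T.Adj x y) (h : T.Between u z y)
    (hzy : z ≠ y) : T.Between u z x := by
  obtain ⟨p, hp⟩ := hT.connected.exists_walk_length_eq_dist u x
  have hz := hT.mem_support_of_between h (p.concat hxy)
  rw [Walk.support_concat, List.mem_append, List.mem_singleton] at hz
  exact hT.connected.between_of_mem_support hp (hz.resolve_right hzy)

lemma IsTree.between_of_adj_of_adj (hT : T.IsTree) (h₁ : T.Adj u v) (h₂ : T.Adj v w)
    (huw : u ≠ w) : T.Between u v w := by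
  have hp : (Walk.cons h₁ (Walk.cons h₂ Walk.nil)).IsPath := by
    simp [h₁.ne, h₂.ne, huw]
  have := hT.length_eq_dist hp
  simp only [Walk.length_cons, Walk.length_nil] at this
  rw [Between, dist_eq_one_iff_adj.2 h₁, dist_eq_one_iff_adj.2 h₂, ← this]

lemma IsTree.between_total (hT : T.IsTree) (hx : T.Between u x v) (hy : T.Between u y v) :
    T.Between u y x ∨ T.Between u x y := by
  obtain ⟨p₁, hp₁⟩ := hT.connected.exists_walk_length_eq_dist u x
  obtain ⟨p₂, hp₂⟩ := hT.connected.exists_walk_length_eq_dist x v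
  have hmem := hT.mem_support_of_between hy (p₁.append p₂)
  rw [Walk.mem_support_append_iff] at hmem
  refine hmem.imp (hT.connected.between_of_mem_support hp₁) fun h => ?_
  have hxyv := hT.connected.between_of_mem_support hp₂ h
  have := hT.connected.dist_triangle (u := u) (v := x) (w := y)
  unfold Between at *
  omega

lemma IsTree.exists_median (hT : T.IsTree) (u v w : α) :
    ∃ m, T.Between v m w ∧ ∀ x, T.Between u x v ∧ T.Between u x w ↔ T.Between u x m := by
  -- `m` is the point of `[u,v] ∩ [u,w]` farthest from `u`; geodesics from `v` and from `w` to `m`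
  -- meet only at `m`, so together they form the path from `v` to `w`.
  have hT' := hT.connected
  let S : ℕ → Prop := fun k => ∃ x, T.Between u x v ∧ T.Between u x w ∧ T.dist u x = k
  obtain ⟨m, hmv, hmw, hm⟩ : S (Nat.findGreatest S (T.dist u v)) :=
    Nat.findGreatest_spec (Nat.zero_le _) ⟨u, between_self_left, between_self_left, dist_self⟩
  have hmax : ∀ y, T.Between u y v → T.Between u y w → T.Between u m y → y = m := by
    intro y hv hw hmy
    have : T.dist u y ≤ T.dist u m :=
      hm ▸ Nat.le_findGreatest (by unfold Between at hv; omega) ⟨y, hv, hw, rfl⟩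
    unfold Between at hmy
    exact (hT'.dist_eq_zero_iff.1 (by omega)).symm
  refine ⟨m, ?_, fun x => ⟨fun ⟨hv, hw⟩ => ?_,
    fun h => ⟨hT'.between_trans_left hmv h, hT'.between_trans_left hmw h⟩⟩⟩
  · obtain ⟨p, hp⟩ := hT'.exists_walk_length_eq_dist v m
    obtain ⟨q, hq⟩ := hT'.exists_walk_length_eq_dist m w
    have hpq : (p.append q).IsPath := (p.isPath_of_length_eq_dist hp).append
        (q.isPath_of_length_eq_dist hq) fun y hyp hyq => by
      have hvy := (hT'.between_of_mem_support hp hyp).symm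
      have hwy := hT'.between_of_mem_support hq hyq
      exact hmax y (hT'.between_trans_right hmv hvy) (hT'.between_trans_right hmw hwy)
        (hT'.between_trans_right_left hmv hvy)
    have := hT.length_eq_dist hpq
    rwa [Walk.length_append, hp, hq] at this
  · rcases hT.between_total hmv hv with h | h
    · exact h
    · rw [hmax x hv hw h]
      exact between_self_right

end SimpleGraph

namespace Matrix

variable {n R : Type*} [Fintype n]

theorem PosDef.eq_zero_on_of_mulVec_eq_zero_on [Ring R] [PartialOrder R] [StarRing R]
    {M : Matrix n n R} (hM : M.PosDef) {s : Set n} {f : n → R}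
    (hharm : ∀ i ∈ s, (M *ᵥ f) i = 0) (hbdry : ∀ i ∈ s, ∀ j ∉ s, M i j ≠ 0 → f j = 0) :
    ∀ i ∈ s, f i = 0 := by
  set x := s.indicator f
  have hMx : ∀ i ∈ s, (M *ᵥ x) i = 0 := by
    intro i hi
    rw [← hharm i hi]
    refine Finset.sum_congr rfl fun j _ => ?_
    by_cases hj : j ∈ s
    · simp [x, hj]
    · by_cases hMij : M i j = 0
      · simp [hMij]
      · simp [x, hj, hbdry i hi j hj hMij]
  have hx : x = 0 := by
    by_contra hx
    refine (hM.dotProduct_mulVec_pos hx).ne' (Finset.sum_eq_zero fun i _ => ?_)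
    by_cases hi : i ∈ s
    · simp [hMx i hi]
    · simp [x, hi]
  intro i hi
  simpa [x, hi] using congrFun hx i

theorem PosDef.apply_mul_apply_lt [CommRing R] [LinearOrder R] [IsStrictOrderedRing R]
    [StarRing R] [TrivialStar R] {V : Matrix n n R} (hV : V.PosDef) {a b : n} (hab : a ≠ b) :
    V a b * V b a < V a a * V b b := by
  have hba : V b a = V a b := by simpa using hV.isHermitian.apply a b
  have hbb : 0 < V b b := hV.diag_pos
  set x : n → R := Pi.single a (V b b) - Pi.single b (V a b)
  have hx : x ≠ 0 := fun h => hbb.ne' (by simpa [x, hab] using congrFun h a)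
  have hquad : star x ⬝ᵥ (V *ᵥ x) = V b b * (V a a * V b b - V a b * V b a) := by
    simp only [x, star_trivial, mulVec_sub, mulVec_single, op_smul_eq_smul, dotProduct_sub,
      dotProduct_smul, sub_dotProduct, single_dotProduct, col_apply, hba, smul_eq_mul]
    ring
  have := hV.dotProduct_mulVec_pos hx
  rw [hquad] at this
  linarith [(mul_pos_iff_of_pos_left hbb).1 this]

section Tree

variable [DecidableEq n] [CommRing R] [PartialOrder R] [StarRing R] {T : SimpleGraph n}
  {M W : Matrix n n R}

/-- The combination `f = W z z • W·ν - W z ν • W·z` of columns of `W` is `M`-harmonic away from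
`z` and `ν` and vanishes at `z`, hence on the component of `μ` in `T - z`. -/
theorem PosDef.apply_mul_apply_of_between (hM : M.PosDef) (hT : T.IsTree)
    (hMT : ∀ i j, i ≠ j → M i j ≠ 0 → T.Adj i j) (hMW : M * W = 1) {μ z ν : n}
    (h : T.Between μ z ν) : W z z * W μ ν = W μ z * W z ν := by
  rcases eq_or_ne z μ with rfl | hzμ
  · ring
  set f := W *ᵥ (Pi.single ν (W z z) - Pi.single z (W z ν))
  have hf : ∀ j, f j = W z z * W j ν - W z ν * W j z := by
    intro j; simp [f, mulVec_sub, mulVec_single]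
  have hMf : M *ᵥ f = Pi.single ν (W z z) - Pi.single z (W z ν) := by
    rw [mulVec_mulVec, hMW, one_mulVec]
  have key := hM.eq_zero_on_of_mulVec_eq_zero_on (s := {j | ¬ T.Between μ z j}) (f := f)
    (fun i hi => ?_) (fun i hi j hj hMij => ?_) μ fun hzμ' => hzμ ?_
  · rw [hf] at key
    linear_combination key
  · have hiν : i ≠ ν := by rintro rfl; exact hi h
    have hiz : i ≠ z := by rintro rfl; exact hi SimpleGraph.between_self_right
    simp [hMf, hiν, hiz]
  · have hij : i ≠ j := by rintro rfl; exact hj hi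
    obtain rfl : z = j := by
      by_contra hzj
      exact hi (hT.between_of_adj_of_between (hMT i j hij hMij) (not_not.1 hj) hzj)
    rw [hf]; ring
  · exact hT.connected.eq_of_between hzμ' SimpleGraph.between_self_left

theorem PosDef.apply_mul_apply_of_adj (hM : M.PosDef) (hT : T.IsTree)
    (hMT : ∀ i j, i ≠ j → M i j ≠ 0 → T.Adj i j) (hMW : M * W = 1) {μ γ : n}
    (h : T.Adj μ γ) : M μ γ * (W μ μ * W γ γ - W μ γ * W γ μ) = -W μ γ := by
  set f := W *ᵥ (Pi.single γ (W μ μ) - Pi.single μ (W μ γ))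
  have hf : ∀ j, f j = W μ μ * W j γ - W μ γ * W j μ := by
    intro j; simp [f, mulVec_sub, mulVec_single]
  have hMf : (M *ᵥ f) μ = -W μ γ := by
    rw [mulVec_mulVec, hMW, one_mulVec]; simp [h.ne]
  rw [← hMf, mulVec, dotProduct, Finset.sum_eq_single γ, hf]
  · intro j _ hjγ
    rcases eq_or_ne j μ with rfl | hjμ
    · rw [hf]; ring
    by_cases hMj : M μ j = 0
    · rw [hMj, zero_mul]
    · have := hM.apply_mul_apply_of_between hT hMT hMW
        (hT.between_of_adj_of_adj (hMT μ j hjμ.symm hMj).symm h hjγ)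
      rw [hf]; linear_combination M μ j * this
  · simp

end Tree

end Matrix

namespace DualGraph

variable (G : DualGraph)

lemma prox_irrefl (μ : Fin G.N) : ¬ G.prox μ μ := fun h => (G.prox_lt h).false

lemma prox_asymm {μ ν : Fin G.N} (h : G.prox μ ν) : ¬ G.prox ν μ :=
  fun h' => (G.prox_lt h).asymm (G.prox_lt h')

lemma eq_of_prox_of_prox {μ ν ρ₁ ρ₂ : Fin G.N} (hμν : μ ≠ ν) (h₁ : G.prox ρ₁ μ ∧ G.prox ρ₁ ν)
    (h₂ : G.prox ρ₂ μ ∧ G.prox ρ₂ ν) : ρ₁ = ρ₂ := by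
  rcases lt_trichotomy ρ₁ ρ₂ with h | h | h
  · exact ((G.prox_pair h₂.1 h₂.2 hμν).2 ρ₁ h h₁).elim
  · exact h
  · exact ((G.prox_pair h₁.1 h₁.2 hμν).2 ρ₂ h h₂).elim

lemma P_apply (μ ν : Fin G.N) :
    G.P μ ν = (if μ = ν then 1 else 0) - (if G.prox μ ν then 1 else 0) := by
  by_cases h : μ = ν
  · subst h; simp [P, G.prox_irrefl]
  · by_cases hp : G.prox μ ν <;> simp [P, h, hp]

lemma det_P : G.P.det = 1 := by
  rw [det_of_isLowerTriangular _ fun μ ν h => ?_]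
  · exact Finset.prod_eq_one fun μ _ => by simp [P]
  · have h' : μ < ν := h
    have hp : ¬ G.prox μ ν := fun hp => (G.prox_lt hp).asymm h'
    simp [P, h'.ne, hp]

lemma isUnit_P : IsUnit G.P := (isUnit_iff_isUnit_det _).2 (by simp [det_P])

lemma Q_apply (μ ν : Fin G.N) :
    G.Q μ ν = (if μ = ν then 1 else 0) + ∑ c ∈ Finset.univ.filter (G.prox μ), G.Q c ν := by
  have := congrFun₂ (mul_nonsing_inv G.P ((isUnit_iff_isUnit_det _).1 G.isUnit_P)) μ ν
  simp only [mul_apply, P_apply, sub_mul, Finset.sum_sub_distrib, ite_mul, one_mul, zero_mul,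
    Finset.sum_ite_eq, Finset.mem_univ, if_true, one_apply] at this
  rw [Q, Finset.sum_filter]
  linarith

lemma Q_nonneg (μ ν : Fin G.N) : 0 ≤ G.Q μ ν := by
  induction μ using WellFoundedLT.induction with
  | ind μ ih =>
    rw [Q_apply]
    refine add_nonneg (by split_ifs <;> norm_num) (Finset.sum_nonneg fun c hc => ?_)
    exact ih c (G.prox_lt (Finset.mem_filter.1 hc).2)

lemma Q_root_pos (μ : Fin G.N) : 0 < G.Q μ G.root := by
  induction μ using WellFoundedLT.induction with
  | ind μ ih =>
    rw [Q_apply]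
    by_cases hμ : μ = G.root
    · simp only [hμ, if_true]
      exact add_pos_of_pos_of_nonneg one_pos (Finset.sum_nonneg fun c _ => G.Q_nonneg c _)
    · obtain ⟨ν, hν⟩ := G.prox_nonempty μ (Nat.pos_of_ne_zero fun h => hμ (Fin.ext h))
      have hmem : ν ∈ Finset.univ.filter (G.prox μ) := Finset.mem_filter.2 ⟨Finset.mem_univ _, hν⟩
      rw [if_neg hμ, zero_add]
      exact (ih ν (G.prox_lt hν)).trans_le
        (Finset.single_le_sum (fun c _ => G.Q_nonneg c _) hmem)

lemma V_eq_Q_mul_Q_transpose : G.V = G.Q * G.Qᵀ := by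
  rw [V, Matrix.mul_inv_rev, ← transpose_nonsing_inv, Q]

lemma V_pos (μ ν : Fin G.N) : 0 < G.V μ ν := by
  rw [V_eq_Q_mul_Q_transpose, mul_apply]
  exact (mul_pos (G.Q_root_pos μ) (G.Q_root_pos ν)).trans_le <|
    Finset.single_le_sum (f := fun c => G.Q μ c * (G.Qᵀ) c ν)
      (fun c _ => mul_nonneg (G.Q_nonneg μ c) (G.Q_nonneg ν c)) (Finset.mem_univ G.root)

lemma posDef_PtP : (G.Pᵀ * G.P).PosDef := by
  simpa [conjTranspose_eq_transpose_of_trivial] using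
    PosDef.conjTranspose_mul_self G.P (mulVec_injective_iff_isUnit.2 G.isUnit_P)

lemma posDef_V : G.V.PosDef := G.posDef_PtP.inv

lemma PtP_mul_V : G.Pᵀ * G.P * G.V = 1 :=
  mul_nonsing_inv _ (by simp [det_P])

lemma PtP_apply_eq_card_sub {μ ν : Fin G.N} (h : μ ≠ ν) : (G.Pᵀ * G.P) μ ν =
    (Finset.univ.filter fun ρ => G.prox ρ μ ∧ G.prox ρ ν).card
      - (if G.prox μ ν then 1 else 0) - (if G.prox ν μ then 1 else 0) := by
  have hterm : ∀ ρ, G.P ρ μ * G.P ρ ν = (if ρ = μ then -(if G.prox μ ν then 1 else 0) else 0)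
      + (if ρ = ν then -(if G.prox ν μ then 1 else 0) else 0)
      + (if G.prox ρ μ ∧ G.prox ρ ν then 1 else 0) := by
    intro ρ
    rcases eq_or_ne ρ μ with rfl | hρμ
    · simp [P_apply, h, prox_irrefl]
    rcases eq_or_ne ρ ν with rfl | hρν
    · simp [P_apply, hρμ, prox_irrefl]
    by_cases h₁ : G.prox ρ μ <;> by_cases h₂ : G.prox ρ ν <;> simp [P_apply, hρμ, hρν, h₁, h₂]
  simp only [mul_apply, transpose_apply, hterm, Finset.sum_add_distrib, Finset.sum_ite_eq',
    Finset.mem_univ, if_true, Finset.sum_boole]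
  ring

lemma PtP_apply_of_ne {μ ν : Fin G.N} (h : μ ≠ ν) : (G.Pᵀ * G.P) μ ν =
    if (G.prox μ ν ∨ G.prox ν μ) ∧ ∀ ρ, ¬(G.prox ρ μ ∧ G.prox ρ ν) then -1 else 0 := by
  rw [G.PtP_apply_eq_card_sub h]
  have hcard₀ (hc : ∀ ρ, ¬(G.prox ρ μ ∧ G.prox ρ ν)) :
      (Finset.univ.filter fun ρ => G.prox ρ μ ∧ G.prox ρ ν).card = 0 :=
    Finset.card_eq_zero.2 (Finset.filter_eq_empty_iff.2 fun ρ _ => hc ρ)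
  by_cases hcond : (G.prox μ ν ∨ G.prox ν μ) ∧ ∀ ρ, ¬(G.prox ρ μ ∧ G.prox ρ ν)
  · rw [if_pos hcond, hcard₀ hcond.2]
    rcases hcond.1 with hp | hp <;> simp [hp, G.prox_asymm hp]
  rw [if_neg hcond]
  by_cases hc : ∃ ρ, G.prox ρ μ ∧ G.prox ρ ν
  · obtain ⟨ρ₀, hρ₀⟩ := hc
    have hcard : (Finset.univ.filter fun ρ => G.prox ρ μ ∧ G.prox ρ ν).card = 1 :=
      Finset.card_eq_one.2 ⟨ρ₀, by
        ext ρ; simpa using ⟨fun hρ => G.eq_of_prox_of_prox h hρ hρ₀, fun h => h ▸ hρ₀⟩⟩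
    rw [hcard]
    rcases (G.prox_pair hρ₀.1 hρ₀.2 h).1 with hp | hp <;> simp [hp, G.prox_asymm hp]
  · have hnc : ∀ ρ, ¬(G.prox ρ μ ∧ G.prox ρ ν) := fun ρ hρ => hc ⟨ρ, hρ⟩
    have hp : ¬G.prox μ ν ∧ ¬G.prox ν μ := not_or.1 fun hp => hcond ⟨hp, hnc⟩
    simp [hcard₀ hnc, hp.1, hp.2]

lemma adj_iff_prox {μ ν : Fin G.N} :
    G.adj μ ν ↔ μ ≠ ν ∧ (G.prox μ ν ∨ G.prox ν μ) ∧ ∀ ρ, ¬(G.prox ρ μ ∧ G.prox ρ ν) := by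
  refine ⟨fun h => ⟨h.1, by_contra fun hc => ?_⟩, fun h => ⟨h.1, ?_⟩⟩
  · have := h.2
    rw [G.PtP_apply_of_ne h.1, if_neg hc] at this
    norm_num at this
  · rw [G.PtP_apply_of_ne h.1, if_pos h.2]

lemma graph_adj_of_PtP_ne_zero (μ ν : Fin G.N) (h : μ ≠ ν) (hM : (G.Pᵀ * G.P) μ ν ≠ 0) :
    G.graph.Adj μ ν := by
  refine ⟨h, ?_⟩
  rw [G.PtP_apply_of_ne h] at hM ⊢
  exact if_pos (by_contra fun hc => hM (if_neg hc))

/-- The dual graph after the first `t` modifications, on the full vertex set: the vertices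
`≥ t` are isolated. -/
def graphUpTo (t : ℕ) : SimpleGraph (Fin G.N) where
  Adj u v := u ≠ v ∧ (u : ℕ) < t ∧ (v : ℕ) < t ∧ (G.prox u v ∨ G.prox v u) ∧
    ∀ ρ : Fin G.N, (ρ : ℕ) < t → ¬(G.prox ρ u ∧ G.prox ρ v)
  symm := ⟨fun _ _ ⟨h₁, h₂, h₃, h₄, h₅⟩ =>
    ⟨h₁.symm, h₃, h₂, h₄.symm, fun ρ hρ h => h₅ ρ hρ h.symm⟩⟩
  loopless := ⟨fun _ h => h.1 rfl⟩

lemma graphUpTo_N : G.graphUpTo G.N = G.graph := by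
  ext u v
  simp only [graphUpTo, Fin.is_lt, true_and, forall_const]
  exact (G.adj_iff_prox).symm

variable {G}

lemma graphUpTo_succ_adj_of_prox {t : ℕ} {w u : Fin G.N} (hw : (w : ℕ) = t) (h : G.prox w u) :
    (G.graphUpTo (t + 1)).Adj w u := by
  have hu := G.prox_lt h
  refine ⟨hu.ne', by omega, by omega, Or.inl h, fun ρ hρ hρw => ?_⟩
  have := G.prox_lt hρw.1
  omega

lemma prox_of_graphUpTo_succ_adj {t : ℕ} {w u : Fin G.N} (hw : (w : ℕ) = t)
    (h : (G.graphUpTo (t + 1)).Adj w u) : G.prox w u :=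
  h.2.2.2.1.resolve_right fun hu => by have := G.prox_lt hu; have := h.2.2.1; omega

lemma graphUpTo_adj_of_succ_adj {t : ℕ} {u v : Fin G.N} (h : (G.graphUpTo (t + 1)).Adj u v)
    (hu : (u : ℕ) ≠ t) (hv : (v : ℕ) ≠ t) : (G.graphUpTo t).Adj u v :=
  ⟨h.1, by have := h.2.1; omega, by have := h.2.2.1; omega, h.2.2.2.1,
    fun ρ hρ => h.2.2.2.2 ρ (by omega)⟩

lemma graphUpTo_succ_reachable_of_adj {t : ℕ} {u v : Fin G.N} (h : (G.graphUpTo t).Adj u v) :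
    (G.graphUpTo (t + 1)).Reachable u v := by
  by_cases hw : ∃ w : Fin G.N, (w : ℕ) = t ∧ G.prox w u ∧ G.prox w v
  · obtain ⟨w, hw, hu, hv⟩ := hw
    exact (graphUpTo_succ_adj_of_prox hw hu).reachable.symm.trans
      (graphUpTo_succ_adj_of_prox hw hv).reachable
  · refine SimpleGraph.Adj.reachable (G := G.graphUpTo (t + 1))
      ⟨h.1, by have := h.2.1; omega, by have := h.2.2.1; omega, h.2.2.2.1, fun ρ hρ hρuv => ?_⟩
    rcases Nat.lt_succ_iff_lt_or_eq.1 hρ with hρ | hρ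
    · exact h.2.2.2.2 ρ hρ hρuv
    · exact hw ⟨ρ, hρ, hρuv⟩

lemma graphUpTo_succ_reachable {t : ℕ} {u v : Fin G.N} (h : (G.graphUpTo t).Reachable u v) :
    (G.graphUpTo (t + 1)).Reachable u v := by
  obtain ⟨p⟩ := h
  induction p with
  | nil => rfl
  | cons h _ ih => exact (graphUpTo_succ_reachable_of_adj h).trans ih

lemma graphUpTo_reachable_root (t : ℕ) (u : Fin G.N) (hu : (u : ℕ) < t) :
    (G.graphUpTo t).Reachable G.root u := by
  induction t generalizing u with
  | zero => omega
  | succ t ih =>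
    rcases Nat.lt_succ_iff_lt_or_eq.1 hu with hu | hu
    · exact graphUpTo_succ_reachable (ih u hu)
    rcases Nat.eq_zero_or_pos t with rfl | ht
    · obtain rfl : u = G.root := Fin.ext hu
      rfl
    obtain ⟨ν, hν⟩ := G.prox_nonempty u (by omega)
    exact (graphUpTo_succ_reachable (ih ν (by have := G.prox_lt hν; omega))).trans
      (graphUpTo_succ_adj_of_prox hu hν).reachable.symm

lemma edges_mem_graphUpTo_of_support {t : ℕ} {u v : Fin G.N}
    (p : (G.graphUpTo (t + 1)).Walk u v) (hp : ∀ x ∈ p.support, (x : ℕ) ≠ t) :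
    ∀ e ∈ p.edges, e ∈ (G.graphUpTo t).edgeSet := by
  intro e he
  induction e using Sym2.ind with
  | _ x y =>
    exact graphUpTo_adj_of_succ_adj (p.adj_of_mem_edges he)
      (hp x (p.fst_mem_support_of_mem_edges he)) (hp y (p.snd_mem_support_of_mem_edges he))

/-- A cycle through the new vertex `w` enters and leaves it through two vertices `a`, `b` to which
`w` is proximate; these were adjacent before `w` was added, so replacing `w` by the edge `ab` gives
a cycle one step earlier. -/
lemma not_isCycle_graphUpTo_succ {t : ℕ} (ih : (G.graphUpTo t).IsAcyclic) {w : Fin G.N}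
    (hw : (w : ℕ) = t) (c : (G.graphUpTo (t + 1)).Walk w w) : ¬ c.IsCycle := by
  intro hc
  cases c with
  | nil => exact hc.ne_nil rfl
  | @cons _ a _ ha q =>
    rw [SimpleGraph.Walk.cons_isCycle_iff] at hc
    obtain ⟨b, hb, r, hr⟩ := SimpleGraph.Walk.exists_eq_cons_of_ne ha.ne q.reverse
    have hrpath : (SimpleGraph.Walk.cons hb r).IsPath := hr ▸ hc.1.reverse
    rw [SimpleGraph.Walk.cons_isPath_iff] at hrpath
    have hab : a ≠ b := by
      rintro rfl
      have : s(w, a) ∈ q.reverse.edges := by rw [hr]; simp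
      exact hc.2 (by simpa using this)
    have ha' : G.prox w a := prox_of_graphUpTo_succ_adj hw ha
    have hb' : G.prox w b := prox_of_graphUpTo_succ_adj hw hb
    have hprox := G.prox_pair ha' hb' hab
    have hadj : (G.graphUpTo t).Adj a b := by
      have := G.prox_lt ha'
      have := G.prox_lt hb'
      exact ⟨hab, by omega, by omega, hprox.1, fun ρ hρ => hprox.2 ρ (by rw [Fin.lt_def]; omega)⟩
    have hr' := edges_mem_graphUpTo_of_support r fun x hx hxt =>
      hrpath.2 (Fin.ext (hxt.trans hw.symm) ▸ hx)
    refine ih _ ((SimpleGraph.Walk.cons_isCycle_iff _ hadj).2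
      ⟨hrpath.1.transfer hr', fun hab' => ?_⟩)
    rw [SimpleGraph.Walk.edges_transfer] at hab'
    exact (r.adj_of_mem_edges hab').2.2.2.2 w (by omega) ⟨ha', hb'⟩

lemma graphUpTo_isAcyclic (t : ℕ) : (G.graphUpTo t).IsAcyclic := by
  induction t with
  | zero => exact SimpleGraph.isAcyclic_bot.anti fun u v h => absurd h.2.1 (Nat.not_lt_zero _)
  | succ t ih =>
    intro v c hc
    by_cases hw : ∃ w ∈ c.support, (w : ℕ) = t
    · obtain ⟨w, hw, hwt⟩ := hw
      exact not_isCycle_graphUpTo_succ ih hwt _ (hc.rotate hw)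
    · simp only [not_exists, not_and] at hw
      exact ih _ (hc.transfer (edges_mem_graphUpTo_of_support c hw))

variable (G)

theorem graph_isTree : G.graph.IsTree := by
  rw [← G.graphUpTo_N]
  have : Nonempty (Fin G.N) := ⟨G.root⟩
  exact ⟨⟨fun u v => (graphUpTo_reachable_root _ u u.isLt).symm.trans
    (graphUpTo_reachable_root _ v v.isLt)⟩, graphUpTo_isAcyclic _⟩


lemma mem_pathSet {u v x : Fin G.N} : x ∈ G.pathSet u v ↔ G.graph.Between u x v := by
  rw [pathSet, Finset.mem_filter_univ]
  rfl

lemma V_mul_V_of_between {μ z ν : Fin G.N} (h : G.graph.Between μ z ν) :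
    G.V z z * G.V μ ν = G.V μ z * G.V z ν :=
  G.posDef_PtP.apply_mul_apply_of_between G.graph_isTree G.graph_adj_of_PtP_ne_zero G.PtP_mul_V h

lemma rho_eq_of_between {μ γ ν m : Fin G.N} (hμ : G.graph.Between μ m ν)
    (hγ : G.graph.Between γ m ν) : G.rho μ γ ν = G.rho μ γ m := by
  rw [rho, rho, div_eq_div_iff (G.V_pos μ ν).ne' (G.V_pos μ m).ne']
  refine mul_left_cancel₀ (G.V_pos m m).ne' ?_
  linear_combination G.V μ m * G.V_mul_V_of_between hγ - G.V γ m * G.V_mul_V_of_between hμ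

lemma rho_lt_of_between {μ γ a b : Fin G.N} (hab : G.graph.Between μ a b)
    (hb : G.graph.Between μ b γ) (hne : a ≠ b) : G.rho μ γ a < G.rho μ γ b := by
  have hγ := G.graph_isTree.connected.between_trans_right_left hb.symm hab.symm
  have h₁ := G.V_mul_V_of_between hγ
  have h₂ := G.V_mul_V_of_between hab
  rw [rho, rho, div_lt_div_iff₀ (G.V_pos μ a) (G.V_pos μ b)]
  refine lt_of_mul_lt_mul_left ?_ (mul_pos (G.V_pos a a) (G.V_pos b b)).le
  calc G.V a a * G.V b b * (G.V γ a * G.V μ b)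
      = G.V a b * G.V b a * (G.V γ b * G.V μ a) := by
        linear_combination (G.V a a * G.V μ b) * h₁ + (G.V γ b * G.V b a) * h₂
    _ < G.V a a * G.V b b * (G.V γ b * G.V μ a) :=
        mul_lt_mul_of_pos_right (G.posDef_V.apply_mul_apply_lt hne)
          (mul_pos (G.V_pos γ b) (G.V_pos μ a))

lemma rho_lt_rho_iff {μ γ a b : Fin G.N} (ha : G.graph.Between μ a γ)
    (hb : G.graph.Between μ b γ) :
    G.rho μ γ a < G.rho μ γ b ↔ G.graph.Between μ a b ∧ a ≠ b := by
  refine ⟨fun h => ?_, fun h => G.rho_lt_of_between h.1 hb h.2⟩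
  have hne : a ≠ b := by rintro rfl; exact lt_irrefl _ h
  refine ⟨(G.graph_isTree.between_total ha hb).resolve_left fun hba => ?_, hne⟩
  exact (G.rho_lt_of_between hba ha hne.symm).asymm h

lemma pathSet_ssubset_pathSet_iff {μ a b : Fin G.N} :
    G.pathSet μ a ⊂ G.pathSet μ b ↔ G.graph.Between μ a b ∧ a ≠ b := by
  have hT := G.graph_isTree.connected
  rw [Finset.ssubset_iff_subset_ne]
  constructor
  · rintro ⟨hsub, hne⟩
    exact ⟨G.mem_pathSet.1 (hsub (G.mem_pathSet.2 SimpleGraph.between_self_right)),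
      by rintro rfl; exact hne rfl⟩
  · rintro ⟨hab, hne⟩
    refine ⟨fun x hx => G.mem_pathSet.2 (hT.between_trans_left hab (G.mem_pathSet.1 hx)),
      fun h => hne (hT.eq_of_between hab (G.mem_pathSet.1 ?_))⟩
    rw [h]
    exact G.mem_pathSet.2 SimpleGraph.between_self_right

lemma exists_rho_eq_and_pathSet_inter_eq (μ γ ν : Fin G.N) :
    ∃ m, G.graph.Between μ m γ ∧ G.rho μ γ ν = G.rho μ γ m ∧
      G.pathSet μ ν ∩ G.pathSet μ γ = G.pathSet μ m := by
  obtain ⟨m, hγν, hm⟩ := G.graph_isTree.exists_median μ γ ν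
  have hmm := (hm m).2 SimpleGraph.between_self_right
  refine ⟨m, hmm.1, G.rho_eq_of_between hmm.2 hγν, ?_⟩
  ext x
  simp only [Finset.mem_inter, mem_pathSet, ← hm, and_comm]

lemma rho_self_of_adj {μ γ : Fin G.N} (h : G.adj μ γ) :
    G.rho μ γ γ = (G.V γ μ + 1) / G.V μ μ := by
  have key := G.posDef_PtP.apply_mul_apply_of_adj G.graph_isTree G.graph_adj_of_PtP_ne_zero
    G.PtP_mul_V h
  rw [h.2] at key
  rw [rho, div_eq_div_iff (G.V_pos μ γ).ne' (G.V_pos μ μ).ne']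
  linear_combination -key

end DualGraph

/-- `ρ_{[μ,γ]}` is strictly increasing along the path from `μ` to `γ` and
constant on paths going away from it; if `μ ∼ γ` then
`ρ_{[μ,γ]}(γ) = (V_{γμ}+1)/V_{μμ}`. -/
theorem stmt4 (G : DualGraph) :
    (∀ μ γ ν₁ ν₂ : Fin G.N,
      (G.rho μ γ ν₁ < G.rho μ γ ν₂ ↔
        G.pathSet μ ν₁ ∩ G.pathSet μ γ ⊂ G.pathSet μ ν₂ ∩ G.pathSet μ γ)) ∧
    (∀ μ γ : Fin G.N, G.adj μ γ → G.rho μ γ γ = (G.V γ μ + 1) / G.V μ μ) := by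
  refine ⟨fun μ γ ν₁ ν₂ => ?_, fun μ γ h => G.rho_self_of_adj h⟩
  obtain ⟨m₁, hm₁, hρ₁, hI₁⟩ := G.exists_rho_eq_and_pathSet_inter_eq μ γ ν₁
  obtain ⟨m₂, hm₂, hρ₂, hI₂⟩ := G.exists_rho_eq_and_pathSet_inter_eq μ γ ν₂
  rw [hρ₁, hρ₂, hI₁, hI₂, G.rho_lt_rho_iff hm₁ hm₂, G.pathSet_ssubset_pathSet_iff]
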